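/- arXiv:math/0701696 — 5 statements merged into one kernel-verified Lean document; each statement's English description precedes it below -/
import Mathlib

section
/- Let N ≥ 1 and let A_N = {α ∈ ℂ : α^N = 1} be the N-th roots of unity. For any integer n with 1 ≤ n ≤ N and any z ∈ ℂ with z^N ≠ 1, one has (1/N) · ∑_{α ∈ A_N} α^n / (1 - α z) = z^{N-n} / (1 - z^N). -/
open Finset

/-- The sum over the N-th roots of unity:
`(1/N) ∑_{α^N = 1} α^n / (1 - α z) = z^{N-n} / (1 - z^N)`. -/
theorem rootsOfUnity_partial_fraction_sum
    (N n : ℕ) (hN : 1 ≤ N) (hn1 : 1 ≤ n) (hnN : n ≤ N)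
    (z : ℂ) (hz : z ^ N ≠ 1) :
    (1 / (N : ℂ)) *
        ∑ α ∈ (Polynomial.nthRoots N (1 : ℂ)).toFinset, α ^ n / (1 - α * z)
      = z ^ (N - n) / (1 - z ^ N) := by
  have hNpos : 0 < N := hN
  have hN0 : (N : ℂ) ≠ 0 := Nat.cast_ne_zero.2 hNpos.ne'
  have hzN : (1 : ℂ) - z ^ N ≠ 0 := sub_ne_zero.2 (Ne.symm hz)
  obtain ⟨ζ, hζ⟩ : ∃ ζ : ℂ, IsPrimitiveRoot ζ N :=
    ⟨_, Complex.isPrimitiveRoot_exp N hNpos.ne'⟩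
  have hne : ∀ α : ℂ, α ^ N = 1 → (1 : ℂ) - α * z ≠ 0 := by
    intro α hα h
    apply hz
    have h1 : α * z = 1 := by linear_combination -h
    have h2 : (α * z) ^ N = 1 := by rw [h1, one_pow]
    rw [mul_pow, hα, one_mul] at h2
    exact h2
  have key : ∀ α : ℂ, α ^ N = 1 →
      α ^ n / (1 - α * z) = α ^ n * (∑ k ∈ range N, (α * z) ^ k) / (1 - z ^ N) := by
    intro α hα
    rw [div_eq_div_iff (hne α hα) hzN]
    have e1 := geom_sum_mul (α * z) N
    linear_combination α ^ n * e1 + α ^ n * z ^ N * hα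
  have himg : (Polynomial.nthRoots N (1 : ℂ)).toFinset
      = (Finset.range N).image (fun j => ζ ^ j) := by
    rw [hζ.nthRoots_eq (one_pow N), Multiset.toFinset_map]
    ext x
    simp
  rw [himg, Finset.sum_image (fun x hx y hy h => hζ.injOn_pow hx hy h)]
  have hmem : ∀ j : ℕ, (ζ ^ j) ^ N = 1 := by
    intro j
    rw [← pow_mul, mul_comm, pow_mul, hζ.pow_eq_one, one_pow]
  calc (1 / (N : ℂ)) * ∑ j ∈ range N, (ζ ^ j) ^ n / (1 - ζ ^ j * z)
      = (1 / (N : ℂ)) * ∑ j ∈ range N,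
          (∑ k ∈ range N, (ζ ^ j) ^ (n + k) * z ^ k) / (1 - z ^ N) := by
        congr 1
        refine Finset.sum_congr rfl fun j _ => ?_
        rw [key _ (hmem j)]
        congr 1
        rw [Finset.mul_sum]
        refine Finset.sum_congr rfl fun k _ => ?_
        rw [mul_pow, pow_add]
        ring
    _ = (1 / (N : ℂ)) * ((∑ k ∈ range N,
          (∑ j ∈ range N, ((ζ ^ (n + k)) ^ j)) * z ^ k) / (1 - z ^ N)) := by
        rw [← Finset.sum_div, Finset.sum_comm]
        congr 2
        refine Finset.sum_congr rfl fun k _ => ?_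
        rw [Finset.sum_mul]
        refine Finset.sum_congr rfl fun j _ => ?_
        rw [← pow_mul, ← pow_mul, mul_comm j (n + k)]
    _ = z ^ (N - n) / (1 - z ^ N) := by
        have hsum : ∀ k ∈ range N, (∑ j ∈ range N, ((ζ ^ (n + k)) ^ j)) * z ^ k
            = if k = N - n then (N : ℂ) * z ^ (N - n) else 0 := by
          intro k hk
          rw [Finset.mem_range] at hk
          by_cases h : k = N - n
          · subst h
            have h1 : ζ ^ (n + (N - n)) = 1 := (hζ.pow_eq_one_iff_dvd _).2 ⟨1, by omega⟩
            rw [h1, if_pos rfl]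
            simp
          · have hnd : ¬ N ∣ n + k := by
              intro ⟨c, hc⟩
              have hb : N * 2 ≤ N * c ∨ c = 0 ∨ c = 1 := by
                rcases c with _ | _ | c
                · omega
                · omega
                · exact Or.inl (Nat.mul_le_mul_left N (by omega))
              rcases hb with hb | hb | hb
              · omega
              · subst hb; simp only [Nat.mul_zero] at hc; omega
              · subst hb; simp only [Nat.mul_one] at hc; omega
            have hne1 : ζ ^ (n + k) ≠ 1 := fun h1 => hnd ((hζ.pow_eq_one_iff_dvd _).1 h1)
            have := geom_sum_mul (ζ ^ (n + k)) N
            have hpow : (ζ ^ (n + k)) ^ N = 1 := by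
              rw [← pow_mul, mul_comm, pow_mul, hζ.pow_eq_one, one_pow]
            have hz0 : (∑ j ∈ range N, (ζ ^ (n + k)) ^ j) = 0 := by
              have h2 : (∑ j ∈ range N, (ζ ^ (n + k)) ^ j) * (ζ ^ (n + k) - 1) = 0 := by
                rw [this, hpow, sub_self]
              rcases mul_eq_zero.1 h2 with h3 | h3
              · exact h3
              · exact absurd (by linear_combination h3) hne1
            rw [hz0, zero_mul, if_neg h]
        have e2 : (∑ k ∈ range N, (∑ j ∈ range N, ((ζ ^ (n + k)) ^ j)) * z ^ k)
            = ∑ k ∈ range N, if k = N - n then (N : ℂ) * z ^ (N - n) else 0 :=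
          Finset.sum_congr rfl hsum
        rw [e2, Finset.sum_ite_eq' (range N) (N - n)
          (fun _ => (N : ℂ) * z ^ (N - n)), if_pos (Finset.mem_range.2 (by omega))]
        field_simp
end

section
/- Let N ≥ 1, 1 ≤ n ≤ N, and z ∈ ℂ with z^N ≠ 1. Then (1/N) · ∑_{α ∈ A_N} α^n / (1 - α z)^2 = z^{N-n} · ( N / (1 - z^N)^2 − (n−1) / (1 - z^N) ). -/
/-!
Expanding `(1 - α z)⁻¹ = (∑_{j<N} (α z)^j) / (1 - z^N)` and using that `∑_α α^t` is `N` or `0`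
according as `N ∣ t` or not gives `∑_α α^m / (1 - α z) = N z^(N-m) / (1 - z^N)` for
`1 ≤ m ≤ N`: only `j = N - m` survives. Since `d/dz (z / (1 - α z)) = 1 / (1 - α z)^2`, the
squared sum is the derivative of `z ↦ z · ∑_α α^m / (1 - α z) = N z^(N-m+1) / (1 - z^N)`, an
identity valid on the open set `{z | z^N ≠ 1}`.
-/

open Finset Polynomial

section PowerSums

variable {R : Type*} [CommRing R] [IsDomain R] [DecidableEq R] {N : ℕ} {ζ : R}

theorem IsPrimitiveRoot.sum_nthRoots_one_eq_sum_range {M : Type*} [AddCommMonoid M]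
    (hζ : IsPrimitiveRoot ζ N) (f : R → M) :
    ∑ α ∈ (nthRoots N (1 : R)).toFinset, f α = ∑ i ∈ range N, f (ζ ^ i) := by
  rw [← Multiset.toFinset_eq hζ.nthRoots_one_nodup]
  simp [Finset.sum, hζ.nthRoots_eq (one_pow N), Multiset.map_map]

theorem IsPrimitiveRoot.sum_nthRoots_one_pow (hζ : IsPrimitiveRoot ζ N) (t : ℕ) :
    ∑ α ∈ (nthRoots N (1 : R)).toFinset, α ^ t = if N ∣ t then (N : R) else 0 := by
  simp only [hζ.sum_nthRoots_one_eq_sum_range, pow_right_comm ζ _ t]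
  split_ifs with h
  · simp [(hζ.pow_eq_one_iff_dvd t).2 h]
  · have hζt : 1 - ζ ^ t ≠ 0 := sub_ne_zero.2 (Ne.symm ((hζ.pow_eq_one_iff_dvd t).not.2 h))
    have := mul_neg_geom_sum (ζ ^ t) N
    rw [pow_right_comm, hζ.pow_eq_one, one_pow, sub_self] at this
    exact (mul_eq_zero.1 this).resolve_left hζt

end PowerSums

theorem Nat.dvd_add_iff_eq_sub_of_lt {N m j : ℕ} (hm : 1 ≤ m) (hmN : m ≤ N) (hj : j < N) :
    N ∣ m + j ↔ j = N - m := by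
  constructor
  · intro h
    have := Nat.eq_of_dvd_of_lt_two_mul (by omega) h (by omega)
    omega
  · rintro rfl
    rw [Nat.add_sub_cancel' hmN]

theorem one_sub_mul_ne_zero_of_pow_eq_one {R : Type*} [CommRing R] {N : ℕ} {α z : R}
    (hα : α ^ N = 1) (hz : z ^ N ≠ 1) : 1 - α * z ≠ 0 := by
  intro h
  have hαz : α * z = 1 := (sub_eq_zero.1 h).symm
  exact hz (by simpa [mul_pow, hα] using congrArg (· ^ N) hαz)

theorem inv_one_sub_mul_eq_geom_sum_div {K : Type*} [Field K] {N : ℕ} {α z : K}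
    (hα : α ^ N = 1) (hz : z ^ N ≠ 1) :
    (1 - α * z)⁻¹ = (∑ j ∈ range N, (α * z) ^ j) / (1 - z ^ N) := by
  have hgeom := mul_neg_geom_sum (α * z) N
  rw [mul_pow, hα, one_mul] at hgeom
  rw [eq_div_iff (sub_ne_zero.2 (Ne.symm hz)), ← hgeom, inv_mul_cancel_left₀
    (one_sub_mul_ne_zero_of_pow_eq_one hα hz)]

theorem IsPrimitiveRoot.sum_nthRoots_one_pow_div_one_sub_mul {K : Type*} [Field K]
    [DecidableEq K] {N : ℕ} {ζ : K} (hζ : IsPrimitiveRoot ζ N) {m : ℕ} (hm : 1 ≤ m) (hmN : m ≤ N)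
    {z : K} (hz : z ^ N ≠ 1) :
    ∑ α ∈ (nthRoots N (1 : K)).toFinset, α ^ m / (1 - α * z) = N * z ^ (N - m) / (1 - z ^ N) := by
  have hN : 0 < N := by omega
  calc ∑ α ∈ (nthRoots N (1 : K)).toFinset, α ^ m / (1 - α * z)
      = (∑ j ∈ range N, (∑ α ∈ (nthRoots N (1 : K)).toFinset, α ^ (m + j)) * z ^ j)
          / (1 - z ^ N) := by
        simp only [Finset.sum_mul, Finset.sum_div]
        rw [Finset.sum_comm]
        refine Finset.sum_congr rfl fun α hα => ?_
        rw [div_eq_mul_inv, inv_one_sub_mul_eq_geom_sum_div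
          ((mem_nthRoots hN).1 (Multiset.mem_toFinset.1 hα)) hz, mul_div_assoc', Finset.mul_sum,
          Finset.sum_div]
        refine Finset.sum_congr rfl fun j _ => ?_
        ring
    _ = N * z ^ (N - m) / (1 - z ^ N) := by
        simp only [hζ.sum_nthRoots_one_pow, ite_mul, zero_mul]
        rw [Finset.sum_congr rfl fun j hj =>
          if_congr (Nat.dvd_add_iff_eq_sub_of_lt hm hmN (mem_range.1 hj)) rfl rfl,
          Finset.sum_ite_eq', if_pos (mem_range.2 (by omega))]

section Derivative

variable {𝕜 : Type*} [NontriviallyNormedField 𝕜]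

theorem hasDerivAt_div_one_sub_mul {a z : 𝕜} (h : 1 - a * z ≠ 0) :
    HasDerivAt (fun w => w / (1 - a * w)) (1 / (1 - a * z) ^ 2) z := by
  exact ((hasDerivAt_id' z).fun_div (((hasDerivAt_id' z).const_mul a).const_sub 1) h).congr_deriv
    (by field_simp; ring)

theorem hasDerivAt_pow_succ_div_one_sub_pow {k N : ℕ} {z : 𝕜} (hz : z ^ N ≠ 1) :
    HasDerivAt (fun w => w ^ (k + 1) / (1 - w ^ N))
      (z ^ k * ((k + 1) * (1 - z ^ N) + N * z ^ N) / (1 - z ^ N) ^ 2) z := by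
  refine ((hasDerivAt_pow (k + 1) z).fun_div ((hasDerivAt_pow N z).const_sub 1)
    (sub_ne_zero.2 (Ne.symm hz))).congr_deriv ?_
  have hN : N ≠ 0 := by rintro rfl; exact hz (pow_zero z)
  obtain ⟨N, rfl⟩ := Nat.exists_eq_add_one_of_ne_zero hN
  simp only [Nat.add_sub_cancel, Nat.cast_add, Nat.cast_one]
  ring

theorem IsPrimitiveRoot.sum_nthRoots_one_pow_div_one_sub_mul_sq [DecidableEq 𝕜]
    {N : ℕ} {ζ : 𝕜} (hζ : IsPrimitiveRoot ζ N) {m : ℕ} (hm : 1 ≤ m) (hmN : m ≤ N) {z : 𝕜}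
    (hz : z ^ N ≠ 1) :
    ∑ α ∈ (nthRoots N (1 : 𝕜)).toFinset, α ^ m / (1 - α * z) ^ 2
      = N * (z ^ (N - m) * (N / (1 - z ^ N) ^ 2 - (m - 1) / (1 - z ^ N))) := by
  have hN : 0 < N := by omega
  have hsum : (fun w => ∑ α ∈ (nthRoots N (1 : 𝕜)).toFinset, α ^ m * (w / (1 - α * w)))
      =ᶠ[nhds z] fun w => N * (w ^ (N - m + 1) / (1 - w ^ N)) := by
    have hU : {w : 𝕜 | w ^ N ≠ 1} ∈ nhds z :=
      (isOpen_compl_singleton.preimage (continuous_pow N)).mem_nhds hz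
    filter_upwards [hU] with w hw
    calc ∑ α ∈ (nthRoots N (1 : 𝕜)).toFinset, α ^ m * (w / (1 - α * w))
        = w * ∑ α ∈ (nthRoots N (1 : 𝕜)).toFinset, α ^ m / (1 - α * w) := by
          rw [Finset.mul_sum]
          exact Finset.sum_congr rfl fun _ _ => by ring
      _ = N * (w ^ (N - m + 1) / (1 - w ^ N)) := by
          rw [hζ.sum_nthRoots_one_pow_div_one_sub_mul hm hmN hw, pow_succ]
          ring
  have hlhs :
      HasDerivAt (fun w => ∑ α ∈ (nthRoots N (1 : 𝕜)).toFinset, α ^ m * (w / (1 - α * w)))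
        (∑ α ∈ (nthRoots N (1 : 𝕜)).toFinset, α ^ m * (1 / (1 - α * z) ^ 2)) z :=
    HasDerivAt.fun_sum fun α hα => (hasDerivAt_div_one_sub_mul
      (one_sub_mul_ne_zero_of_pow_eq_one ((mem_nthRoots hN).1 (Multiset.mem_toFinset.1 hα))
        hz)).const_mul _
  have hrhs := (hasDerivAt_pow_succ_div_one_sub_pow (k := N - m) hz).const_mul (N : 𝕜)
  have := (hsum.hasDerivAt_iff.1 hlhs).unique hrhs
  simp only [mul_one_div] at this
  rw [this, Nat.cast_sub hmN]
  field_simp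
  ring

end Derivative

theorem rootsOfUnity_partial_fraction_sum_sq_general
    (N n : ℕ) (hn1 : 1 ≤ n) (hnN : n ≤ N)
    (z : ℂ) (hz : z ^ N ≠ 1) :
    (1 / (N : ℂ)) *
        ∑ α ∈ (Polynomial.nthRoots N (1 : ℂ)).toFinset, α ^ n / (1 - α * z) ^ 2
      = z ^ (N - n) *
          ((N : ℂ) / (1 - z ^ N) ^ 2 - ((n : ℂ) - 1) / (1 - z ^ N)) := by
  have hN : N ≠ 0 := by omega
  rw [(Complex.isPrimitiveRoot_exp N hN).sum_nthRoots_one_pow_div_one_sub_mul_sq hn1 hnN hz,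
    one_div, inv_mul_cancel_left₀ (Nat.cast_ne_zero.2 hN)]

/-- `(1/N) ∑_{α^N = 1} α^n / (1 - α z)^2
      = z^{N-n} (N/(1-z^N)^2 - (n-1)/(1-z^N))`. -/
theorem rootsOfUnity_partial_fraction_sum_sq
    (N n : ℕ) (hN : 1 ≤ N) (hn1 : 1 ≤ n) (hnN : n ≤ N)
    (z : ℂ) (hz : z ^ N ≠ 1) :
    (1 / (N : ℂ)) *
        ∑ α ∈ (Polynomial.nthRoots N (1 : ℂ)).toFinset, α ^ n / (1 - α * z) ^ 2
      = z ^ (N - n) *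
          ((N : ℂ) / (1 - z ^ N) ^ 2 - ((n : ℂ) - 1) / (1 - z ^ N)) :=
  rootsOfUnity_partial_fraction_sum_sq_general N n hn1 hnN z hz
end

section
/- For every integer M ≥ 1 and every integer r ≥ 0, one has ∫_0^∞ [₁F₁(−r; M; t)]² e^{−2t} t^{M−1} dt = (M+2r−1)! · ((M−1)!)² / ( 2^{M+2r} · ((M+r−1)!)² ). -/
open Finset Nat Real MeasureTheory Set Filter


/-- Finite difference of binomial coefficients. -/
lemma lemC (n : ℕ) : ∀ β k : ℕ,
    ∑ l ∈ range (n + 1), (-1 : ℤ) ^ l * n.choose l * (β + l).choose k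
      = (-1) ^ n * (if n ≤ k then ((β.choose (k - n) : ℤ)) else 0) := by
  induction n with
  | zero => simp
  | succ n ih =>
    intro β k
    have h1 : ∑ l ∈ range (n + 1 + 1), (-1 : ℤ) ^ l * (n + 1).choose l * (β + l).choose k
        = (∑ l ∈ range (n + 1), (-1 : ℤ) ^ (l + 1) * ((n.choose l : ℤ) + n.choose (l + 1))
            * (β + (l + 1)).choose k) + (β.choose k : ℤ) := by
      rw [Finset.sum_range_succ']
      simp only [Nat.choose_succ_succ, Nat.choose_zero_right]
      push_cast
      ring_nf
      simp [Nat.succ_eq_add_one, add_comm, add_left_comm]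
    have h2 : ∑ l ∈ range (n + 1), (-1 : ℤ) ^ (l + 1) * ((n.choose l : ℤ) + n.choose (l + 1))
            * (β + (l + 1)).choose k
        = -(∑ l ∈ range (n + 1), (-1 : ℤ) ^ l * n.choose l * ((β + 1) + l).choose k)
          + ∑ l ∈ range (n + 1), (-1 : ℤ) ^ (l + 1) * (n.choose (l + 1) : ℤ)
              * (β + (l + 1)).choose k := by
      rw [← Finset.sum_neg_distrib, ← Finset.sum_add_distrib]
      refine Finset.sum_congr rfl fun l _ => ?_
      have : β + (l + 1) = β + 1 + l := by ring
      rw [this]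
      ring
    have h3 : (∑ l ∈ range (n + 1), (-1 : ℤ) ^ (l + 1) * (n.choose (l + 1) : ℤ)
              * (β + (l + 1)).choose k) + (β.choose k : ℤ)
        = ∑ l ∈ range (n + 1), (-1 : ℤ) ^ l * n.choose l * (β + l).choose k := by
      have := Finset.sum_range_succ' (fun l => (-1 : ℤ) ^ l * n.choose l * (β + l).choose k)
        (n + 1)
      rw [Finset.sum_range_succ (fun l => (-1 : ℤ) ^ l * n.choose l * (β + l).choose k) (n+1)]
        at this
      simp only [Nat.choose_succ_self, Nat.cast_zero, mul_zero, zero_mul, add_zero,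
        pow_zero, Nat.choose_zero_right, Nat.cast_one, mul_one, one_mul] at this ⊢
      linarith [this]
    rw [h1, h2, add_assoc, h3, ih, ih]
    by_cases hnk : n + 1 ≤ k
    · have hk : n ≤ k := by omega
      have hsub : k - n = (k - (n + 1)) + 1 := by omega
      rw [if_pos hnk, if_pos hk, if_pos hk, hsub, Nat.choose_succ_succ]
      push_cast
      ring
    · by_cases hnk2 : n ≤ k
      · have : k = n := by omega
        subst this
        simp [hnk]
      · simp [hnk, hnk2]

/-- subset-of-a-subset sum. -/
lemma lemA (r l : ℕ) (hl : l ≤ r) :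
    ∑ m ∈ range (r + 1), (r.choose m : ℤ) * m.choose l = (r.choose l : ℤ) * 2 ^ (r - l) := by
  have hz : ∀ m ∈ range (r + 1), m ∉ Finset.Ico l (r + 1) →
      (r.choose m : ℤ) * m.choose l = 0 := by
    intro m hmr hm
    simp only [Finset.mem_range] at hmr
    simp only [Finset.mem_Ico, not_and, not_lt] at hm
    rcases lt_or_ge m l with h | h
    · rw [Nat.choose_eq_zero_of_lt h]; simp
    · exfalso; omega
  rw [← Finset.sum_subset (by intro m hm; simp at hm ⊢; omega) hz,
    Finset.sum_Ico_eq_sum_range]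
  have hrange : r + 1 - l = (r - l) + 1 := by omega
  rw [hrange]
  have : ∀ j ∈ range (r - l + 1),
      (r.choose (l + j) : ℤ) * (l + j).choose l = (r.choose l : ℤ) * (r - l).choose j := by
    intro j hj
    simp only [Finset.mem_range] at hj
    have h1 : l ≤ l + j := Nat.le_add_right _ _
    have h2 : l + j ≤ r := by omega
    have := Nat.choose_mul (n := r) h1
    rw [Nat.add_sub_cancel_left] at this
    exact_mod_cast congrArg (Nat.cast : ℕ → ℤ) this
  rw [Finset.sum_congr rfl this, ← Finset.mul_sum]
  congr 1
  exact_mod_cast congrArg (Nat.cast : ℕ → ℤ) (Nat.sum_range_choose (r - l))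

/-- alternating version with powers of two. -/
lemma lemB (r n : ℕ) (hn : n ≤ r) :
    ∑ k ∈ range (r + 1), (-1 : ℤ) ^ k * r.choose k * k.choose n * 2 ^ (r - k)
      = (-1) ^ n * r.choose n := by
  have hz : ∀ k ∈ range (r + 1), k ∉ Finset.Ico n (r + 1) →
      (-1 : ℤ) ^ k * r.choose k * k.choose n * 2 ^ (r - k) = 0 := by
    intro k hkr hk
    simp only [Finset.mem_range] at hkr
    simp only [Finset.mem_Ico, not_and, not_lt] at hk
    rcases lt_or_ge k n with h | h
    · rw [Nat.choose_eq_zero_of_lt h]; simp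
    · exfalso; omega
  rw [← Finset.sum_subset (by intro k hk; simp at hk ⊢; omega) hz,
    Finset.sum_Ico_eq_sum_range]
  have hrange : r + 1 - n = (r - n) + 1 := by omega
  rw [hrange]
  have hterm : ∀ j ∈ range (r - n + 1),
      (-1 : ℤ) ^ (n + j) * r.choose (n + j) * (n + j).choose n * 2 ^ (r - (n + j))
        = ((-1) ^ n * r.choose n) * ((-1 : ℤ) ^ j * (r - n).choose j * 2 ^ ((r - n) - j)) := by
    intro j hj
    simp only [Finset.mem_range] at hj
    have h2 : n + j ≤ r := by omega
    have hcm := Nat.choose_mul (n := r) (Nat.le_add_right n j)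
    rw [Nat.add_sub_cancel_left] at hcm
    have hcast : (r.choose (n+j) : ℤ) * (n+j).choose n = (r.choose n : ℤ) * (r-n).choose j := by
      exact_mod_cast congrArg (Nat.cast : ℕ → ℤ) hcm
    have hexp : r - (n + j) = (r - n) - j := by omega
    rw [pow_add, hexp]
    linear_combination ((-1 : ℤ) ^ n * (-1) ^ j * 2 ^ (r - n - j)) * hcast
  rw [Finset.sum_congr rfl hterm, ← Finset.mul_sum]
  have key : ∑ j ∈ range (r - n + 1), (-1 : ℤ) ^ j * (r - n).choose j * 2 ^ ((r - n) - j)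
      = 1 := by
    have h := add_pow (-1 : ℤ) 2 (r - n)
    norm_num at h
    calc ∑ j ∈ range (r - n + 1), (-1 : ℤ) ^ j * (r - n).choose j * 2 ^ ((r - n) - j)
        = ∑ j ∈ range (r - n + 1), (-1 : ℤ) ^ j * 2 ^ ((r - n) - j) * (r - n).choose j :=
          Finset.sum_congr rfl fun j _ => by ring
      _ = 1 := h.symm
  rw [key, mul_one]

/-- `lemC` with extended summation range. -/
lemma lemC' (R n β k : ℕ) (h : n ≤ R) :
    ∑ l ∈ range (R + 1), (-1 : ℤ) ^ l * n.choose l * (β + l).choose k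
      = (-1) ^ n * (if n ≤ k then ((β.choose (k - n) : ℤ)) else 0) := by
  rw [← lemC n β k]
  symm
  apply Finset.sum_subset (Finset.range_subset_range.mpr (by omega))
  intro l _ hl
  simp only [Finset.mem_range] at hl
  rw [Nat.choose_eq_zero_of_lt (by omega)]
  simp

lemma natZ (α r : ℕ) :
    ((α + r).factorial : ℤ) * (α + 2 * r).descFactorial r = (α + 2 * r).factorial := by
  have h := Nat.factorial_mul_descFactorial (show r ≤ α + 2 * r by omega)
  rw [show α + 2 * r - r = α + r by omega] at h
  exact_mod_cast h

lemma lemV (α r : ℕ) :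
    ∑ m ∈ range (r + 1),
        (r.choose m : ℤ) * r.choose m * m.factorial * (α + r).descFactorial (r - m)
      = (α + 2 * r).descFactorial r := by
  have h1 : (α + 2 * r).choose r = ∑ m ∈ range (r + 1), (α + r).choose (r - m) * r.choose m := by
    have h := Nat.add_choose_eq (α + r) r r
    rw [Finset.Nat.sum_antidiagonal_eq_sum_range_succ_mk] at h
    rw [show α + 2 * r = α + r + r by omega, h, ← Finset.sum_range_reflect]
    apply Finset.sum_congr rfl
    intro m hm
    simp only [Finset.mem_range] at hm
    rw [show r + 1 - 1 - m = r - m by omega, show r - (r - m) = m by omega]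
  have h2 : ((α + 2 * r).descFactorial r : ℤ) = r.factorial * (α + 2 * r).choose r := by
    exact_mod_cast congrArg (Nat.cast : ℕ → ℤ)
      (Nat.descFactorial_eq_factorial_mul_choose (α + 2 * r) r)
  have h1' : ((α + 2 * r).choose r : ℤ)
      = ∑ m ∈ range (r + 1), ((α + r).choose (r - m) : ℤ) * r.choose m := by
    exact_mod_cast congrArg (Nat.cast : ℕ → ℤ) h1
  rw [h2, h1', Finset.mul_sum]
  apply Finset.sum_congr rfl
  intro m hm
  simp only [Finset.mem_range] at hm
  have e1 : ((α + r).descFactorial (r - m) : ℤ)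
      = (r - m).factorial * (α + r).choose (r - m) := by
    exact_mod_cast congrArg (Nat.cast : ℕ → ℤ)
      (Nat.descFactorial_eq_factorial_mul_choose (α + r) (r - m))
  have e2 : (r.choose m : ℤ) * m.factorial * (r - m).factorial = r.factorial := by
    exact_mod_cast congrArg (Nat.cast : ℕ → ℤ)
      (Nat.choose_mul_factorial_mul_factorial (show m ≤ r by omega))
  rw [e1]
  linear_combination ((r.choose m : ℤ) * (α + r).choose (r - m)) * e2

/-- `q l * (α+k+l)! = (α+r)! * k! * C(α+k+l, k)` (as integers). -/
lemma nat1 (α r k l : ℕ) (hl : l ≤ r) :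
    ((α + r).descFactorial (r - l) : ℤ) * (α + k + l).factorial
      = (α + r).factorial * (k.factorial * (α + k + l).choose k) := by
  have e1 : (α + l).factorial * (α + r).descFactorial (r - l) = (α + r).factorial := by
    have h := Nat.factorial_mul_descFactorial (show r - l ≤ α + r by omega)
    rwa [show α + r - (r - l) = α + l by omega] at h
  have e2 : (α + k + l).choose k * k.factorial * (α + l).factorial
      = (α + k + l).factorial := by
    have h := Nat.choose_mul_factorial_mul_factorial (show k ≤ α + k + l by omega)
    rwa [show α + k + l - k = α + l by omega] at h
  have e1' : ((α + l).factorial : ℤ) * (α + r).descFactorial (r - l)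
      = (α + r).factorial := by exact_mod_cast e1
  have e2' : ((α + k + l).choose k : ℤ) * k.factorial * (α + l).factorial
      = (α + k + l).factorial := by exact_mod_cast e2
  have hpos : ((α + l).factorial : ℤ) ≠ 0 := by positivity
  apply mul_left_cancel₀ hpos
  calc ((α + l).factorial : ℤ)
        * (((α + r).descFactorial (r - l) : ℤ) * (α + k + l).factorial)
      = (((α + l).factorial : ℤ) * (α + r).descFactorial (r - l)) * (α + k + l).factorial := by
        ring
    _ = ((α + r).factorial : ℤ) * (α + k + l).factorial := by rw [e1']
    _ = ((α + r).factorial : ℤ) * (((α + k + l).choose k : ℤ) * k.factorial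
          * (α + l).factorial) := by rw [e2']
    _ = ((α + l).factorial : ℤ)
          * (((α + r).factorial : ℤ) * (k.factorial * (α + k + l).choose k)) := by ring

/-- `q k * k! * C(α+k, k-m) = q m * m! * C(k, m)` (as integers, with the `ite`). -/
lemma nat2 (α r k m : ℕ) (hk : k ≤ r) (hm : m ≤ r) :
    ((α + r).descFactorial (r - k) : ℤ) * k.factorial
        * (if m ≤ k then ((α + k).choose (k - m) : ℤ) else 0)
      = (α + r).descFactorial (r - m) * m.factorial * k.choose m := by
  by_cases h : m ≤ k
  · rw [if_pos h]
    have e1 : ((α + k).factorial : ℤ) * (α + r).descFactorial (r - k)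
        = (α + r).factorial := by
      have h' := Nat.factorial_mul_descFactorial (show r - k ≤ α + r by omega)
      rw [show α + r - (r - k) = α + k by omega] at h'
      exact_mod_cast h'
    have e2 : ((α + m).factorial : ℤ) * (α + r).descFactorial (r - m)
        = (α + r).factorial := by
      have h' := Nat.factorial_mul_descFactorial (show r - m ≤ α + r by omega)
      rw [show α + r - (r - m) = α + m by omega] at h'
      exact_mod_cast h'
    have e3 : ((α + k).choose (k - m) : ℤ) * (k - m).factorial * (α + m).factorial
        = (α + k).factorial := by
      have h' := Nat.choose_mul_factorial_mul_factorial (show k - m ≤ α + k by omega)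
      rw [show α + k - (k - m) = α + m by omega] at h'
      exact_mod_cast h'
    have e4 : (k.choose m : ℤ) * m.factorial * (k - m).factorial = k.factorial := by
      exact_mod_cast congrArg (Nat.cast : ℕ → ℤ)
        (Nat.choose_mul_factorial_mul_factorial h)
    have hpos : ((α + m).factorial : ℤ) * (k - m).factorial ≠ 0 := by positivity
    apply mul_left_cancel₀ hpos
    calc ((α + m).factorial : ℤ) * (k - m).factorial
          * ((α + r).descFactorial (r - k) * k.factorial * (α + k).choose (k - m))
        = ((α + k).choose (k - m) * (k - m).factorial * (α + m).factorial)
            * (α + r).descFactorial (r - k) * k.factorial := by ring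
      _ = (α + k).factorial * (α + r).descFactorial (r - k) * k.factorial := by rw [e3]
      _ = (α + r).factorial * k.factorial := by rw [e1]
      _ = (α + r).factorial * (k.choose m * m.factorial * (k - m).factorial) := by rw [e4]
      _ = ((α + m).factorial * (α + r).descFactorial (r - m))
            * (k.choose m * m.factorial * (k - m).factorial) := by rw [e2]
      _ = (α + m).factorial * (k - m).factorial
          * ((α + r).descFactorial (r - m) * m.factorial * k.choose m) := by ring
  · rw [if_neg h, Nat.choose_eq_zero_of_lt (by omega)]
    simp

/-- The main integer identity. -/
lemma mainZ (α r : ℕ) :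
    ∑ k ∈ range (r + 1), ∑ l ∈ range (r + 1),
        (-1 : ℤ) ^ (k + l) * r.choose k * r.choose l * 2 ^ (2 * r - (k + l))
          * (α + k + l).factorial * (α + r).descFactorial (r - k)
          * (α + r).descFactorial (r - l)
      = (α + 2 * r).factorial := by
  have hin : ∀ k ∈ range (r + 1),
      ∑ l ∈ range (r + 1),
        (-1 : ℤ) ^ (k + l) * r.choose k * r.choose l * 2 ^ (2 * r - (k + l))
          * (α + k + l).factorial * (α + r).descFactorial (r - k)
          * (α + r).descFactorial (r - l)
      = ∑ m ∈ range (r + 1),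
          ((-1 : ℤ) ^ k * r.choose k * 2 ^ (r - k) * (α + r).descFactorial (r - k)
              * (α + r).factorial * k.factorial)
            * ((r.choose m : ℤ)
              * ((-1 : ℤ) ^ m * (if m ≤ k then (((α + k).choose (k - m) : ℤ)) else 0))) := by
    intro k hk
    simp only [Finset.mem_range] at hk
    calc ∑ l ∈ range (r + 1),
          (-1 : ℤ) ^ (k + l) * r.choose k * r.choose l * 2 ^ (2 * r - (k + l))
            * (α + k + l).factorial * (α + r).descFactorial (r - k)
            * (α + r).descFactorial (r - l)
        = ∑ l ∈ range (r + 1), ∑ m ∈ range (r + 1),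
            ((-1 : ℤ) ^ k * r.choose k * 2 ^ (r - k) * (α + r).descFactorial (r - k)
                * (α + r).factorial * k.factorial)
              * ((r.choose m : ℤ)
                * ((-1 : ℤ) ^ l * m.choose l * (α + k + l).choose k)) := by
          refine Finset.sum_congr rfl fun l hl => ?_
          simp only [Finset.mem_range] at hl
          have hA := lemA r l (by omega)
          have h1 := nat1 α r k l (by omega)
          have hpull : ∑ m ∈ range (r + 1),
              ((-1 : ℤ) ^ k * r.choose k * 2 ^ (r - k) * (α + r).descFactorial (r - k)
                  * (α + r).factorial * k.factorial)
                * ((r.choose m : ℤ)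
                  * ((-1 : ℤ) ^ l * m.choose l * (α + k + l).choose k))
              = ((-1 : ℤ) ^ k * r.choose k * 2 ^ (r - k) * (α + r).descFactorial (r - k)
                  * (α + r).factorial * k.factorial
                  * ((-1 : ℤ) ^ l * (α + k + l).choose k))
                * ∑ m ∈ range (r + 1), (r.choose m : ℤ) * m.choose l := by
            rw [Finset.mul_sum]
            exact Finset.sum_congr rfl fun m _ => by ring
          rw [hpull, hA, show 2 * r - (k + l) = (r - k) + (r - l) by omega, pow_add, pow_add]
          linear_combination ((-1 : ℤ) ^ k * (-1 : ℤ) ^ l * r.choose k * r.choose l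
            * 2 ^ (r - k) * 2 ^ (r - l) * ((α + r).descFactorial (r - k) : ℤ)) * h1
      _ = _ := by
          rw [Finset.sum_comm]
          refine Finset.sum_congr rfl fun m hm => ?_
          simp only [Finset.mem_range] at hm
          have hpull : ∑ l ∈ range (r + 1),
              ((-1 : ℤ) ^ k * r.choose k * 2 ^ (r - k) * (α + r).descFactorial (r - k)
                  * (α + r).factorial * k.factorial)
                * ((r.choose m : ℤ)
                  * ((-1 : ℤ) ^ l * m.choose l * (α + k + l).choose k))
              = ((-1 : ℤ) ^ k * r.choose k * 2 ^ (r - k) * (α + r).descFactorial (r - k)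
                  * (α + r).factorial * k.factorial * (r.choose m : ℤ))
                * ∑ l ∈ range (r + 1),
                    (-1 : ℤ) ^ l * m.choose l * ((α + k) + l).choose k := by
            rw [Finset.mul_sum]
            exact Finset.sum_congr rfl fun l _ => by ring
          rw [hpull, lemC' r m (α + k) k (by omega)]
          ring
  calc ∑ k ∈ range (r + 1), ∑ l ∈ range (r + 1),
        (-1 : ℤ) ^ (k + l) * r.choose k * r.choose l * 2 ^ (2 * r - (k + l))
          * (α + k + l).factorial * (α + r).descFactorial (r - k)
          * (α + r).descFactorial (r - l)
      = ∑ k ∈ range (r + 1), ∑ m ∈ range (r + 1),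
          ((-1 : ℤ) ^ k * r.choose k * 2 ^ (r - k) * (α + r).descFactorial (r - k)
              * (α + r).factorial * k.factorial)
            * ((r.choose m : ℤ)
              * ((-1 : ℤ) ^ m * (if m ≤ k then (((α + k).choose (k - m) : ℤ)) else 0))) :=
        Finset.sum_congr rfl hin
    _ = ∑ m ∈ range (r + 1), ∑ k ∈ range (r + 1),
          ((-1 : ℤ) ^ k * r.choose k * 2 ^ (r - k) * (α + r).descFactorial (r - k)
              * (α + r).factorial * k.factorial)
            * ((r.choose m : ℤ)
              * ((-1 : ℤ) ^ m * (if m ≤ k then (((α + k).choose (k - m) : ℤ)) else 0))) :=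
        Finset.sum_comm
    _ = ∑ m ∈ range (r + 1),
          ((α + r).factorial : ℤ)
            * ((r.choose m : ℤ) * r.choose m * m.factorial
                * (α + r).descFactorial (r - m)) := by
        refine Finset.sum_congr rfl fun m hm => ?_
        simp only [Finset.mem_range] at hm
        have hterm : ∀ k ∈ range (r + 1),
            ((-1 : ℤ) ^ k * r.choose k * 2 ^ (r - k) * (α + r).descFactorial (r - k)
                * (α + r).factorial * k.factorial)
              * ((r.choose m : ℤ)
                * ((-1 : ℤ) ^ m * (if m ≤ k then (((α + k).choose (k - m) : ℤ)) else 0)))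
            = (((α + r).factorial : ℤ) * ((-1 : ℤ) ^ m * r.choose m
                * (α + r).descFactorial (r - m) * m.factorial))
              * ((-1 : ℤ) ^ k * r.choose k * k.choose m * 2 ^ (r - k)) := by
          intro k hk
          simp only [Finset.mem_range] at hk
          have h2 := nat2 α r k m (by omega) (by omega)
          linear_combination ((-1 : ℤ) ^ k * r.choose k * 2 ^ (r - k) * (α + r).factorial
            * r.choose m * (-1 : ℤ) ^ m) * h2
        rw [Finset.sum_congr rfl hterm, ← Finset.mul_sum, lemB r m (by omega)]
        have hsq : ((-1 : ℤ) ^ m) * ((-1 : ℤ) ^ m) = 1 := by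
          rw [← pow_add]
          exact Even.neg_one_pow ⟨m, by ring⟩
        linear_combination (((α + r).factorial : ℤ) * r.choose m * r.choose m * m.factorial
          * (α + r).descFactorial (r - m)) * hsq
    _ = ((α + r).factorial : ℤ)
          * ∑ m ∈ range (r + 1),
              (r.choose m : ℤ) * r.choose m * m.factorial
                * (α + r).descFactorial (r - m) := by rw [Finset.mul_sum]
    _ = ((α + r).factorial : ℤ) * (α + 2 * r).descFactorial r := by rw [lemV α r]
    _ = ((α + 2 * r).factorial : ℤ) := natZ α r


lemma integral_pow_exp (n : ℕ) :
    ∫ t in Set.Ioi (0 : ℝ), t ^ n * Real.exp (-2 * t) = (n.factorial : ℝ) / 2 ^ (n + 1) := by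
  have h := Real.integral_rpow_mul_exp_neg_mul_Ioi
    (a := (n : ℝ) + 1) (r := 2) (by positivity) (by norm_num)
  have h2 : ∫ t in Set.Ioi (0 : ℝ), t ^ n * Real.exp (-2 * t)
      = ∫ t in Set.Ioi (0 : ℝ), t ^ ((n : ℝ) + 1 - 1) * Real.exp (-(2 * t)) := by
    refine setIntegral_congr_fun measurableSet_Ioi fun t ht => ?_
    rw [show ((n : ℝ) + 1 - 1) = ((n : ℕ) : ℝ) by push_cast; ring, Real.rpow_natCast]
    ring_nf
  rw [h2, h, Real.Gamma_nat_eq_factorial,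
    show ((n : ℝ) + 1) = (((n + 1 : ℕ)) : ℝ) by push_cast; ring, Real.rpow_natCast]
  rw [div_pow, one_pow]
  ring

lemma integrable_pow_exp (n : ℕ) :
    MeasureTheory.IntegrableOn (fun t : ℝ => t ^ n * Real.exp (-2 * t)) (Set.Ioi 0) := by
  apply integrable_of_isBigO_exp_neg (b := 1) one_pos
  · exact Continuous.continuousOn (by continuity)
  · apply Asymptotics.IsLittleO.isBigO
    apply Asymptotics.isLittleO_of_tendsto
    · intro x hx
      exact absurd hx (Real.exp_ne_zero _)
    · have key : ∀ x : ℝ, x ^ n * Real.exp (-2 * x) / Real.exp (-1 * x)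
          = x ^ n * Real.exp (-x) := by
        intro x
        rw [mul_div_assoc, ← Real.exp_sub]
        ring_nf
      simp only [key]
      exact tendsto_pow_mul_exp_neg_atTop_nhds_zero n


lemma fact_mul_descFact_cast (α r k : ℕ) (hk : k ≤ r) :
    (((α + k).factorial : ℝ)) * ((α + r).descFactorial (r - k) : ℝ)
      = ((α + r).factorial : ℝ) := by
  have h := Nat.factorial_mul_descFactorial (show r - k ≤ α + r by omega)
  rw [show α + r - (r - k) = α + k by omega] at h
  exact_mod_cast h

lemma descFact_cast_eq (α r k : ℕ) (hk : k ≤ r) :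
    ((α + r).descFactorial (r - k) : ℝ)
      = ((α + r).factorial : ℝ) / ((α + k).factorial : ℝ) := by
  rw [eq_div_iff (by positivity : ((α + k).factorial : ℝ) ≠ 0)]
  rw [mul_comm]
  exact fact_mul_descFact_cast α r k hk

lemma prod_neg_cast (r : ℕ) : ∀ k : ℕ, k ≤ r →
    (∏ j ∈ Finset.range k, (-(r : ℝ) + (j : ℕ))) = (-1) ^ k * (r.descFactorial k : ℝ) := by
  intro k
  induction k with
  | zero => simp
  | succ k ih =>
    intro hk
    rw [Finset.prod_range_succ, ih (by omega), Nat.descFactorial_succ]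
    have hc : (-(r : ℝ) + (k : ℕ)) = -(((r - k : ℕ) : ℝ)) := by
      rw [Nat.cast_sub (by omega : k ≤ r)]
      ring
    rw [hc]
    push_cast
    ring

lemma prod_pos_cast (α : ℕ) : ∀ k : ℕ,
    (∏ j ∈ Finset.range k, (((α + 1 : ℕ) : ℝ) + (j : ℕ)))
      = ((α + k).factorial : ℝ) / (α.factorial : ℝ) := by
  intro k
  induction k with
  | zero =>
    simp only [Finset.prod_range_zero, Nat.add_zero]
    exact (div_self (by positivity : (α.factorial : ℝ) ≠ 0)).symm
  | succ k ih =>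
    rw [Finset.prod_range_succ, ih, show α + (k + 1) = (α + k) + 1 by ring,
      Nat.factorial_succ]
    have hα : (α.factorial : ℝ) ≠ 0 := by positivity
    field_simp
    push_cast
    ring

/-- `∫₀^∞ [₁F₁(-r; M; t)]² e^{-2t} t^{M-1} dt
      = (M+2r-1)! ((M-1)!)² / (2^{M+2r} ((M+r-1)!)²)`. -/
theorem confluent_hypergeometric_integral
    (M : ℕ) (hM : 1 ≤ M) (r : ℕ) :
    (∫ t in Set.Ioi (0 : ℝ),
        (∑ k ∈ Finset.range (r + 1),
            ((∏ j ∈ Finset.range k, (-(r : ℝ) + j)) /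
              (∏ j ∈ Finset.range k, ((M : ℝ) + j))) * t ^ k / (k.factorial : ℝ)) ^ 2 *
          Real.exp (-2 * t) * t ^ (M - 1))
      = ((M + 2 * r - 1).factorial : ℝ) * ((M - 1).factorial : ℝ) ^ 2 /
          (2 ^ (M + 2 * r) * ((M + r - 1).factorial : ℝ) ^ 2) := by
  obtain ⟨α, rfl⟩ : ∃ α, M = α + 1 := ⟨M - 1, by omega⟩
  simp only [show α + 1 - 1 = α by omega, show α + 1 + 2 * r - 1 = α + 2 * r by omega,
    show α + 1 + r - 1 = α + r by omega]
  have hfun : ∀ t : ℝ,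
      (∑ k ∈ Finset.range (r + 1),
          ((∏ j ∈ Finset.range k, (-(r : ℝ) + j)) /
            (∏ j ∈ Finset.range k, (((α + 1 : ℕ) : ℝ) + j))) * t ^ k / (k.factorial : ℝ)) ^ 2 *
        Real.exp (-2 * t) * t ^ α
      = ∑ k ∈ Finset.range (r + 1), ∑ l ∈ Finset.range (r + 1),
          (((∏ j ∈ Finset.range k, (-(r : ℝ) + j)) /
              (∏ j ∈ Finset.range k, (((α + 1 : ℕ) : ℝ) + j)) / (k.factorial : ℝ)) *
            ((∏ j ∈ Finset.range l, (-(r : ℝ) + j)) /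
              (∏ j ∈ Finset.range l, (((α + 1 : ℕ) : ℝ) + j)) / (l.factorial : ℝ))) *
          (t ^ (α + k + l) * Real.exp (-2 * t)) := by
    intro t
    have h1 : (∑ k ∈ Finset.range (r + 1),
        ((∏ j ∈ Finset.range k, (-(r : ℝ) + j)) /
          (∏ j ∈ Finset.range k, (((α + 1 : ℕ) : ℝ) + j))) * t ^ k / (k.factorial : ℝ))
        = ∑ k ∈ Finset.range (r + 1),
            ((∏ j ∈ Finset.range k, (-(r : ℝ) + j)) /
              (∏ j ∈ Finset.range k, (((α + 1 : ℕ) : ℝ) + j)) / (k.factorial : ℝ)) * t ^ k :=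
      Finset.sum_congr rfl fun k _ => by ring
    rw [h1, sq, Finset.sum_mul_sum]
    simp only [Finset.sum_mul]
    refine Finset.sum_congr rfl fun k _ => Finset.sum_congr rfl fun l _ => ?_
    rw [pow_add, pow_add]
    ring
  rw [MeasureTheory.setIntegral_congr_fun measurableSet_Ioi (fun t _ => hfun t)]
  have hint : ∀ (c : ℝ) (n : ℕ),
      MeasureTheory.Integrable (fun t : ℝ => c * (t ^ n * Real.exp (-2 * t)))
        (MeasureTheory.volume.restrict (Set.Ioi 0)) :=
    fun c n => (integrable_pow_exp n).const_mul c
  rw [MeasureTheory.integral_finset_sum _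
    (fun k _ => MeasureTheory.integrable_finset_sum _ (fun l _ => hint _ _))]
  have hswap : ∀ k ∈ Finset.range (r + 1),
      (∫ t in Set.Ioi (0 : ℝ), ∑ l ∈ Finset.range (r + 1),
          (((∏ j ∈ Finset.range k, (-(r : ℝ) + j)) /
              (∏ j ∈ Finset.range k, (((α + 1 : ℕ) : ℝ) + j)) / (k.factorial : ℝ)) *
            ((∏ j ∈ Finset.range l, (-(r : ℝ) + j)) /
              (∏ j ∈ Finset.range l, (((α + 1 : ℕ) : ℝ) + j)) / (l.factorial : ℝ))) *
          (t ^ (α + k + l) * Real.exp (-2 * t)))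
      = ∑ l ∈ Finset.range (r + 1),
          (((∏ j ∈ Finset.range k, (-(r : ℝ) + j)) /
              (∏ j ∈ Finset.range k, (((α + 1 : ℕ) : ℝ) + j)) / (k.factorial : ℝ)) *
            ((∏ j ∈ Finset.range l, (-(r : ℝ) + j)) /
              (∏ j ∈ Finset.range l, (((α + 1 : ℕ) : ℝ) + j)) / (l.factorial : ℝ))) *
          (((α + k + l).factorial : ℝ) / 2 ^ (α + k + l + 1)) := by
    intro k _
    rw [MeasureTheory.integral_finset_sum _ (fun l _ => hint _ _)]
    exact Finset.sum_congr rfl fun l _ => by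
      rw [MeasureTheory.integral_const_mul, integral_pow_exp]
  rw [Finset.sum_congr rfl hswap]
  -- now pure algebra
  have hzR : (∑ k ∈ Finset.range (r + 1), ∑ l ∈ Finset.range (r + 1),
      ((-1 : ℝ) ^ (k + l) * (r.choose k : ℝ) * (r.choose l : ℝ) * 2 ^ (2 * r - (k + l))
        * ((α + k + l).factorial : ℝ) * ((α + r).descFactorial (r - k) : ℝ)
        * ((α + r).descFactorial (r - l) : ℝ)))
      = ((α + 2 * r).factorial : ℝ) := by
    exact_mod_cast congrArg (Int.cast : ℤ → ℝ) (mainZ α r)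
  calc ∑ k ∈ Finset.range (r + 1), ∑ l ∈ Finset.range (r + 1),
        (((∏ j ∈ Finset.range k, (-(r : ℝ) + j)) /
            (∏ j ∈ Finset.range k, (((α + 1 : ℕ) : ℝ) + j)) / (k.factorial : ℝ)) *
          ((∏ j ∈ Finset.range l, (-(r : ℝ) + j)) /
            (∏ j ∈ Finset.range l, (((α + 1 : ℕ) : ℝ) + j)) / (l.factorial : ℝ))) *
        (((α + k + l).factorial : ℝ) / 2 ^ (α + k + l + 1))
      = ∑ k ∈ Finset.range (r + 1), ∑ l ∈ Finset.range (r + 1),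
          ((-1 : ℝ) ^ (k + l) * (r.choose k : ℝ) * (r.choose l : ℝ) * 2 ^ (2 * r - (k + l))
            * ((α + k + l).factorial : ℝ) * ((α + r).descFactorial (r - k) : ℝ)
            * ((α + r).descFactorial (r - l) : ℝ))
          * ((α.factorial : ℝ) ^ 2 / (2 ^ (α + 1 + 2 * r) * ((α + r).factorial : ℝ) ^ 2)) := by
        refine Finset.sum_congr rfl fun k hk => Finset.sum_congr rfl fun l hl => ?_
        simp only [Finset.mem_range] at hk hl
        have hk' : k ≤ r := by omega
        have hl' : l ≤ r := by omega
        rw [prod_neg_cast r k hk', prod_neg_cast r l hl', prod_pos_cast α k, prod_pos_cast α l,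
          descFact_cast_eq α r k hk', descFact_cast_eq α r l hl']
        have h3 : (r.descFactorial k : ℝ) = (k.factorial : ℝ) * (r.choose k : ℝ) := by
          exact_mod_cast congrArg (Nat.cast : ℕ → ℝ)
            (Nat.descFactorial_eq_factorial_mul_choose r k)
        have h4 : (r.descFactorial l : ℝ) = (l.factorial : ℝ) * (r.choose l : ℝ) := by
          exact_mod_cast congrArg (Nat.cast : ℕ → ℝ)
            (Nat.descFactorial_eq_factorial_mul_choose r l)
        have h5 : (2 : ℝ) ^ (α + 1 + 2 * r) = 2 ^ (α + k + l + 1) * 2 ^ (2 * r - (k + l)) := by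
          rw [← pow_add]
          congr 1
          omega
        rw [h3, h4, h5, pow_add]
        have e1 : ((α + k).factorial : ℝ) ≠ 0 := by positivity
        have e2 : ((α + l).factorial : ℝ) ≠ 0 := by positivity
        have e3 : ((α + r).factorial : ℝ) ≠ 0 := by positivity
        have e4 : (α.factorial : ℝ) ≠ 0 := by positivity
        have e5 : (k.factorial : ℝ) ≠ 0 := by positivity
        have e6 : (l.factorial : ℝ) ≠ 0 := by positivity
        field_simp
        ring
    _ = (∑ k ∈ Finset.range (r + 1), ∑ l ∈ Finset.range (r + 1),
          ((-1 : ℝ) ^ (k + l) * (r.choose k : ℝ) * (r.choose l : ℝ) * 2 ^ (2 * r - (k + l))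
            * ((α + k + l).factorial : ℝ) * ((α + r).descFactorial (r - k) : ℝ)
            * ((α + r).descFactorial (r - l) : ℝ)))
          * ((α.factorial : ℝ) ^ 2 / (2 ^ (α + 1 + 2 * r) * ((α + r).factorial : ℝ) ^ 2)) := by
        rw [Finset.sum_mul]
        exact Finset.sum_congr rfl fun k _ => (Finset.sum_mul _ _ _).symm
    _ = ((α + 2 * r).factorial : ℝ)
          * ((α.factorial : ℝ) ^ 2 / (2 ^ (α + 1 + 2 * r) * ((α + r).factorial : ℝ) ^ 2)) := by
        rw [hzR]
    _ = ((α + 2 * r).factorial : ℝ) * ((α.factorial : ℝ)) ^ 2 /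
          (2 ^ (α + 1 + 2 * r) * (((α + r).factorial : ℝ)) ^ 2) := by
        ring
end

section
/- Fix N ≥ 1 and 1 ≤ n ≤ N, and write E_{n,N}(z) = (1/N) ∑_{α ∈ A_N} α^n exp(−2i·Re(α z)). Then for all z ∈ ℂ∖{0}, E_{n,N}(z) = z^{−n} · ∑_{l ∈ ℤ} ∑_{k ≥ 0, k−n+Nl ≥ 0} ((−1)^k (−i)^{−n+Nl} / ((k−n+Nl)! · k!)) · |z|^{2k} · z^{Nl}, where the double series converges absolutely. -/
open Finset Complex

lemma char_sum (N : ℕ) (hN : 1 ≤ N) (m : ℤ) :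
    ∑ α ∈ (Polynomial.nthRoots N (1 : ℂ)).toFinset, α ^ m
      = if (N : ℤ) ∣ m then (N : ℂ) else 0 := by
  have h0 : N ≠ 0 := by omega
  set ζ : ℂ := Complex.exp (2 * Real.pi * Complex.I / N) with hζdef
  have hζ : IsPrimitiveRoot ζ N := Complex.isPrimitiveRoot_exp N h0
  have hζ0 : ζ ≠ 0 := hζ.ne_zero h0
  have hroots : Polynomial.nthRoots N (1 : ℂ) = (Multiset.range N).map (fun i => ζ ^ i * 1) :=
    hζ.nthRoots_eq (one_pow N)
  have hnodup : (Polynomial.nthRoots N (1 : ℂ)).Nodup := hζ.nthRoots_nodup one_ne_zero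
  rw [Finset.sum, Multiset.toFinset_val, Multiset.dedup_eq_self.mpr hnodup, hroots,
    Multiset.map_map]
  simp only [Function.comp, mul_one]
  have : ∀ i : ℕ, (ζ ^ i) ^ m = (ζ ^ m) ^ i := by
    intro i
    rw [← zpow_natCast ζ i, ← zpow_mul, mul_comm, zpow_mul, zpow_natCast]
  simp only [this]
  show (∑ i ∈ Finset.range N, (ζ ^ m) ^ i) = _
  by_cases hdvd : (N : ℤ) ∣ m
  · rw [if_pos hdvd]
    have h1 : ζ ^ m = 1 := (hζ.zpow_eq_one_iff_dvd m).mpr hdvd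
    simp [h1]
  · rw [if_neg hdvd]
    have h1 : ζ ^ m ≠ 1 := fun h => hdvd ((hζ.zpow_eq_one_iff_dvd m).mp h)
    rw [geom_sum_eq h1]
    have : (ζ ^ m) ^ N = 1 := by
      rw [← zpow_natCast, ← zpow_mul, mul_comm, zpow_mul, zpow_natCast, hζ.pow_eq_one, one_zpow]
    rw [this]
    simp

lemma cexp_tsum (w : ℂ) : Complex.exp w = ∑' j : ℕ, w ^ j / j.factorial := by
  rw [Complex.exp_eq_exp_ℂ, NormedSpace.exp_eq_tsum_div]

lemma summable_norm_aux (w : ℂ) : Summable (fun j : ℕ => ‖w ^ j / (j.factorial : ℂ)‖) := by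
  simpa [norm_div, norm_pow] using Real.summable_pow_div_factorial ‖w‖

lemma conj_root (N : ℕ) (hN : 1 ≤ N) {α : ℂ} (hα : α ∈ (Polynomial.nthRoots N (1 : ℂ)).toFinset) :
    (starRingEnd ℂ) α = α⁻¹ := by
  rw [Multiset.mem_toFinset, Polynomial.mem_nthRoots (by omega : 0 < N)] at hα
  have hα0 : α ≠ 0 := by
    intro h; rw [h, zero_pow (by omega : N ≠ 0)] at hα; exact one_ne_zero hα.symm
  have habs : ‖α‖ = 1 :=
    Complex.norm_eq_one_of_pow_eq_one hα (by omega)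
  have : (starRingEnd ℂ) α * α = 1 := by
    rw [mul_comm, Complex.mul_conj, Complex.normSq_eq_norm_sq, habs]
    norm_num
  exact eq_inv_of_mul_eq_one_left this

lemma alpha_expand (N n : ℕ) (hN : 1 ≤ N) (z : ℂ)
    {α : ℂ} (hα : α ∈ (Polynomial.nthRoots N (1 : ℂ)).toFinset) :
    α ^ n * Complex.exp (-2 * Complex.I * (((α * z).re : ℝ) : ℂ))
      = ∑' p : ℕ × ℕ, α ^ ((n : ℤ) + p.1 - p.2) *
          ((-Complex.I * z) ^ p.1 / p.1.factorial * ((-Complex.I * (starRingEnd ℂ) z) ^ p.2 / p.2.factorial)) := by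
  have hα0 : α ≠ 0 := by
    intro h
    rw [Multiset.mem_toFinset, Polynomial.mem_nthRoots (by omega : 0 < N), h,
      zero_pow (by omega : N ≠ 0)] at hα
    exact one_ne_zero hα.symm
  have hc : (starRingEnd ℂ) α = α⁻¹ := conj_root N hN hα
  have hsplit : Complex.exp (-2 * Complex.I * (((α * z).re : ℝ) : ℂ))
      = Complex.exp (-Complex.I * (α * z)) * Complex.exp (-Complex.I * ((starRingEnd ℂ) α * (starRingEnd ℂ) z)) := by
    rw [← Complex.exp_add]
    congr 1
    have := Complex.add_conj (α * z)
    rw [map_mul] at this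
    push_cast at this ⊢
    linear_combination Complex.I * this
  rw [hsplit, cexp_tsum, cexp_tsum,
    tsum_mul_tsum_of_summable_norm (summable_norm_aux _) (summable_norm_aux _), ← tsum_mul_left]
  congr 1
  ext p
  have hp : α ^ ((n : ℤ) + p.1 - p.2) = α ^ n * α ^ p.1 * (α ^ p.2)⁻¹ := by
    rw [← zpow_natCast α n, ← zpow_natCast α p.1, ← zpow_natCast α p.2, ← zpow_neg,
      ← zpow_add₀ hα0, ← zpow_add₀ hα0]
    ring_nf
  rw [hp, hc, mul_pow, mul_pow, mul_pow, mul_pow, inv_pow]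
  field_simp
  ring

lemma term_eq (z : ℂ) (hz : z ≠ 0) (j k : ℕ) (m : ℤ) (hm : (j : ℤ) = (k : ℤ) + m) :
    (-Complex.I * z) ^ j / (j.factorial : ℂ) *
        ((-Complex.I * (starRingEnd ℂ) z) ^ k / (k.factorial : ℂ))
      = (-1 : ℂ) ^ k * (-Complex.I) ^ m / ((j.factorial : ℂ) * (k.factorial : ℂ)) *
          ((‖z‖ ^ (2 * k) : ℝ) : ℂ) * z ^ m := by
  have hI : (-Complex.I : ℂ) ≠ 0 := by simp [Complex.I_ne_zero]
  have h1 : ((-Complex.I) ^ j : ℂ) * (-Complex.I) ^ k = (-1 : ℂ) ^ k * (-Complex.I) ^ m := by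
    rw [← zpow_natCast (-Complex.I) j, ← zpow_natCast (-Complex.I) k, ← zpow_add₀ hI, hm]
    rw [show (k : ℤ) + m + k = m + (2 * k : ℕ) by push_cast; ring, zpow_add₀ hI, zpow_natCast,
      pow_mul]
    have : ((-Complex.I) ^ 2 : ℂ) = -1 := by
      rw [neg_pow, Complex.I_sq]; norm_num
    rw [this, mul_comm]
  have hconj : (starRingEnd ℂ) z = ((Complex.normSq z : ℝ) : ℂ) * z⁻¹ := by
    field_simp
    rw [mul_comm]
    exact Complex.mul_conj z
  have h2 : z ^ j * ((starRingEnd ℂ) z) ^ k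
      = ((‖z‖ ^ (2 * k) : ℝ) : ℂ) * z ^ m := by
    rw [hconj, mul_pow, show ((‖z‖ ^ (2 * k) : ℝ) : ℂ) = ((Complex.normSq z : ℝ) : ℂ) ^ k by
      rw [pow_mul, Complex.sq_norm]; push_cast; ring]
    rw [inv_pow, ← zpow_natCast z k, ← zpow_neg, ← zpow_natCast z j, mul_left_comm,
      ← zpow_add₀ hz, hm, show (k : ℤ) + m + -(k : ℤ) = m by ring]
  rw [mul_pow, mul_pow]
  linear_combination (z ^ j * ((starRingEnd ℂ) z) ^ k / ((j.factorial : ℂ) * (k.factorial : ℂ))) * h1 +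
    ((-1:ℂ) ^ k * (-Complex.I) ^ m / ((j.factorial : ℂ) * (k.factorial : ℂ))) * h2

lemma abs_root (N : ℕ) (hN : 1 ≤ N) {α : ℂ}
    (hα : α ∈ (Polynomial.nthRoots N (1 : ℂ)).toFinset) : ‖α‖ = 1 := by
  rw [Multiset.mem_toFinset, Polynomial.mem_nthRoots (by omega : 0 < N)] at hα
  exact Complex.norm_eq_one_of_pow_eq_one hα (by omega)


/-- Double power-series expansion of `E_{n,N}`: for `z ≠ 0`,
`E_{n,N}(z) = z^{-n} ∑_{l ∈ ℤ} ∑_{k ≥ 0} ((-1)^k (-i)^{-n+Nl} / ((k-n+Nl)! k!)) |z|^{2k} z^{Nl}`,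
the series converging absolutely (terms with `k - n + Nl < 0` omitted). -/
theorem E_double_series_expansion
    (N n : ℕ) (hN : 1 ≤ N) (hn1 : 1 ≤ n) (hnN : n ≤ N)
    (z : ℂ) (hz : z ≠ 0) :
    Summable (fun p : ℤ × ℕ =>
        ‖(if 0 ≤ (p.2 : ℤ) - n + N * p.1 then
          (-1 : ℂ) ^ p.2 * (-Complex.I) ^ ((N : ℤ) * p.1 - n) /
              ((((p.2 : ℤ) - n + N * p.1).toNat.factorial : ℂ) * (p.2.factorial : ℂ)) *
            ((‖z‖ ^ (2 * p.2) : ℝ) : ℂ) * z ^ ((N : ℤ) * p.1)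
        else 0)‖) ∧
    (1 / (N : ℂ)) * ∑ α ∈ (Polynomial.nthRoots N (1 : ℂ)).toFinset,
        α ^ n * Complex.exp (-2 * Complex.I * (((α * z).re : ℝ) : ℂ))
      = z ^ (-(n : ℤ)) *
          ∑' p : ℤ × ℕ,
            (if 0 ≤ (p.2 : ℤ) - n + N * p.1 then
              (-1 : ℂ) ^ p.2 * (-Complex.I) ^ ((N : ℤ) * p.1 - n) /
                  ((((p.2 : ℤ) - n + N * p.1).toNat.factorial : ℂ) * (p.2.factorial : ℂ)) *
                ((‖z‖ ^ (2 * p.2) : ℝ) : ℂ) * z ^ ((N : ℤ) * p.1)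
            else 0) := by
  have hzc : (starRingEnd ℂ) z ≠ 0 := by simpa using hz
  have hI : (-Complex.I : ℂ) ≠ 0 := by simp [Complex.I_ne_zero]
  have hN0 : (N : ℤ) ≠ 0 := by exact_mod_cast (by omega : N ≠ 0)
  set a : ℕ → ℂ := fun j => (-Complex.I * z) ^ j / j.factorial with ha
  set b : ℕ → ℂ := fun k => (-Complex.I * (starRingEnd ℂ) z) ^ k / k.factorial with hb
  have hab0 : ∀ p : ℕ × ℕ, a p.1 * b p.2 ≠ 0 := by
    intro p
    apply mul_ne_zero <;>
      exact div_ne_zero (pow_ne_zero _ (mul_ne_zero hI (by assumption))) 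
        (Nat.cast_ne_zero.mpr (Nat.factorial_ne_zero _))
  set f : ℕ × ℕ → ℂ := fun p =>
    if (N : ℤ) ∣ ((n : ℤ) + p.1 - p.2) then a p.1 * b p.2 else 0 with hfdef
  set Tt : ℤ × ℕ → ℂ := fun p =>
    if 0 ≤ (p.2 : ℤ) - n + N * p.1 then
      (-1 : ℂ) ^ p.2 * (-Complex.I) ^ ((N : ℤ) * p.1 - n) /
          ((((p.2 : ℤ) - n + N * p.1).toNat.factorial : ℂ) * (p.2.factorial : ℂ)) *
        ((‖z‖ ^ (2 * p.2) : ℝ) : ℂ) * z ^ ((N : ℤ) * p.1)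
    else 0 with hTt
  set G : ℤ × ℕ → ℂ := fun q => z ^ (-(n : ℤ)) * Tt q with hG
  -- summability of the ℕ×ℕ family
  have hab : Summable (fun p : ℕ × ℕ => ‖a p.1 * b p.2‖) := by
    have := Summable.mul_of_nonneg (summable_norm_aux (-Complex.I * z))
      (summable_norm_aux (-Complex.I * (starRingEnd ℂ) z))
      (fun _ => norm_nonneg _) (fun _ => norm_nonneg _)
    exact this.congr (fun p => (norm_mul _ _).symm)
  have hf : Summable f := by
    apply Summable.of_norm_bounded hab
    intro p
    by_cases hd : (N : ℤ) ∣ ((n : ℤ) + p.1 - p.2)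
    · simp [hfdef, hd]
    · simp only [hfdef, hd, if_false, norm_zero]
      positivity
  -- support characterizations
  have hfs : ∀ p : ℕ × ℕ, p ∈ Function.support f ↔ (N : ℤ) ∣ ((n : ℤ) + p.1 - p.2) := by
    intro p
    constructor
    · intro h
      by_contra hd
      exact h (by simp [hfdef, hd])
    · intro hd
      simp only [Function.mem_support, hfdef, if_pos hd]
      exact hab0 p
  have hGs : ∀ q : ℤ × ℕ, q ∈ Function.support G ↔ 0 ≤ (q.2 : ℤ) - n + N * q.1 := by
    intro q
    constructor
    · intro h
      by_contra hd
      exact h (by simp [hG, hTt, hd])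
    · intro hd
      simp only [Function.mem_support, hG, hTt, if_pos hd]
      apply mul_ne_zero (zpow_ne_zero _ hz)
      apply mul_ne_zero
      apply mul_ne_zero
      · apply div_ne_zero
        · exact mul_ne_zero (pow_ne_zero _ (by norm_num)) (zpow_ne_zero _ hI)
        · exact mul_ne_zero (Nat.cast_ne_zero.mpr (Nat.factorial_ne_zero _))
            (Nat.cast_ne_zero.mpr (Nat.factorial_ne_zero _))
      · exact_mod_cast pow_ne_zero _ (norm_ne_zero_iff.mpr hz)
      · exact zpow_ne_zero _ hz
  -- the support equivalence
  let e : (Function.support f) ≃ (Function.support G) :=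
    { toFun := fun x => ⟨((((n : ℤ) + x.1.1 - x.1.2) / N), x.1.2), by
        have hd := (hfs x.1).mp x.2
        rw [hGs]
        have : (N : ℤ) * (((n : ℤ) + x.1.1 - x.1.2) / N) = (n : ℤ) + x.1.1 - x.1.2 :=
          Int.mul_ediv_cancel' hd
        simp only []
        omega⟩
      invFun := fun y => ⟨((((y.1.2 : ℤ) - n + N * y.1.1).toNat), y.1.2), by
        have hd := (hGs y.1).mp y.2
        rw [hfs]
        have := Int.toNat_of_nonneg hd
        simp only []
        rw [this]
        exact ⟨y.1.1, by ring⟩⟩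
      left_inv := by
        rintro ⟨⟨j, k⟩, hp⟩
        have hd := (hfs (j, k)).mp hp
        have h1 : (N : ℤ) * (((n : ℤ) + j - k) / N) = (n : ℤ) + j - k :=
          Int.mul_ediv_cancel' hd
        apply Subtype.ext
        simp only []
        congr 1
        omega
      right_inv := by
        rintro ⟨⟨l, k⟩, hq⟩
        have hd : (0:ℤ) ≤ (k : ℤ) - n + N * l := (hGs (l, k)).mp hq
        have h1 := Int.toNat_of_nonneg hd
        apply Subtype.ext
        simp only []
        congr 1
        have : (n : ℤ) + (((k : ℤ) - n + N * l).toNat : ℤ) - k = N * l := by omega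
        rw [this, Int.mul_ediv_cancel_left _ hN0]
      }
  have he : ∀ x : Function.support f, G (e x) = f x := by
    rintro ⟨⟨j, k⟩, hp⟩
    have hd := (hfs (j, k)).mp hp
    set l : ℤ := ((n : ℤ) + j - k) / N with hl
    have h1 : (N : ℤ) * l = (n : ℤ) + j - k := Int.mul_ediv_cancel' hd
    have h2 : (0:ℤ) ≤ (k : ℤ) - n + N * l := by omega
    have h3 : ((k : ℤ) - n + N * l).toNat = j := by omega
    show G (l, k) = f (j, k)
    rw [hG, hTt, hfdef]
    simp only [if_pos h2, if_pos hd, h3]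
    rw [term_eq z hz j k ((N : ℤ) * l - n) (by omega)]
    rw [show (N : ℤ) * l - (n:ℤ) = (N : ℤ) * l + (-(n:ℤ)) by ring, zpow_add₀ hz]
    ring
  have htsum : ∑' p, f p = ∑' q, G q := Equiv.tsum_eq_tsum_of_support e he
  have hGsum : Summable G := (Equiv.summable_iff_of_support e he).mp hf
  -- Summability conjunct
  have hTtsum : Summable Tt := by
    have := hGsum.mul_left (z ^ (n : ℤ))
    apply this.congr
    intro q
    rw [hG]
    simp only []
    rw [← mul_assoc, ← zpow_add₀ hz]
    simp
  constructor
  · show Summable (fun p : ℤ × ℕ => ‖Tt p‖)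
    exact hTtsum.norm
  -- Main identity
  have step1 : ∑ α ∈ (Polynomial.nthRoots N (1 : ℂ)).toFinset,
      α ^ n * Complex.exp (-2 * Complex.I * (((α * z).re : ℝ) : ℂ))
      = ∑ α ∈ (Polynomial.nthRoots N (1 : ℂ)).toFinset,
          ∑' p : ℕ × ℕ, α ^ ((n : ℤ) + p.1 - p.2) * (a p.1 * b p.2) := by
    apply Finset.sum_congr rfl
    intro α hα
    rw [alpha_expand N n hN z hα]
  have hsummand : ∀ α ∈ (Polynomial.nthRoots N (1 : ℂ)).toFinset,
      Summable (fun p : ℕ × ℕ => α ^ ((n : ℤ) + p.1 - p.2) * (a p.1 * b p.2)) := by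
    intro α hα
    apply Summable.of_norm
    apply hab.congr
    intro p
    have h1 : ‖α ^ ((n : ℤ) + p.1 - p.2) * (a p.1 * b p.2)‖ = ‖a p.1 * b p.2‖ := by
      rw [norm_mul, norm_zpow, abs_root N hN hα, one_zpow, one_mul]
    exact h1.symm
  have step2 : ∑ α ∈ (Polynomial.nthRoots N (1 : ℂ)).toFinset,
      ∑' p : ℕ × ℕ, α ^ ((n : ℤ) + p.1 - p.2) * (a p.1 * b p.2)
      = ∑' p : ℕ × ℕ, ∑ α ∈ (Polynomial.nthRoots N (1 : ℂ)).toFinset,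
          α ^ ((n : ℤ) + p.1 - p.2) * (a p.1 * b p.2) :=
    (Summable.tsum_finsetSum hsummand).symm
  have step3 : (1 / (N : ℂ)) * ∑' p : ℕ × ℕ, ∑ α ∈ (Polynomial.nthRoots N (1 : ℂ)).toFinset,
      α ^ ((n : ℤ) + p.1 - p.2) * (a p.1 * b p.2) = ∑' p, f p := by
    rw [← tsum_mul_left]
    congr 1
    funext p
    rw [← Finset.sum_mul, char_sum N hN]
    simp only [hfdef]
    by_cases hd : (N : ℤ) ∣ ((n : ℤ) + p.1 - p.2)
    · rw [if_pos hd, if_pos hd, ← mul_assoc]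
      rw [one_div, inv_mul_cancel₀ (Nat.cast_ne_zero.mpr (by omega : N ≠ 0)), one_mul]
    · simp [hd]
  rw [step1, step2, step3, htsum, hG, tsum_mul_left]
end

section
/- Fix N ≥ 1 and 1 ≤ n ≤ N, and let D_{n,N} be the function on ℂ∖{0} determined by E_{n,N}(z) = z^{N−n} D_{n,N}(z^N), where E_{n,N}(z) = (1/N) ∑_{α ∈ A_N} α^n exp(−2i·Re(α z)). Then |D_{n,N}(w)| ≤ |w|^{n/N − 1} for all w ∈ ℂ∖{0}. -/
open Finset

/-- If `E_{n,N}(z) = z^{N-n} D(z^N)` on `ℂ∖{0}`, then `|D(w)| ≤ |w|^{n/N - 1}`. -/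
theorem D_bound
    (N n : ℕ) (hN : 1 ≤ N) (hn1 : 1 ≤ n) (hnN : n ≤ N)
    (D : ℂ → ℂ)
    (hD : ∀ z : ℂ, z ≠ 0 →
      (1 / (N : ℂ)) * ∑ α ∈ (Polynomial.nthRoots N (1 : ℂ)).toFinset,
          α ^ n * Complex.exp (-2 * Complex.I * (((α * z).re : ℝ) : ℂ))
        = z ^ (N - n) * D (z ^ N)) :
    ∀ w : ℂ, w ≠ 0 → ‖D w‖ ≤ ‖w‖ ^ ((n : ℝ) / N - 1) := by
  intro w hw
  have hN0 : (N : ℕ) ≠ 0 := by omega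
  set z : ℂ := w ^ ((N : ℂ)⁻¹) with hz
  have hzN : z ^ N = w := Complex.cpow_nat_inv_pow w hN0
  have hz0 : z ≠ 0 := by
    intro h
    apply hw
    rw [← hzN, h, zero_pow hN0]
  -- card of nth roots finset
  have hprim : IsPrimitiveRoot (Complex.exp (2 * Real.pi * Complex.I / N)) N :=
    Complex.isPrimitiveRoot_exp N hN0
  have hcard : (Polynomial.nthRoots N (1 : ℂ)).toFinset.card = N := by
    have := hprim.card_nthRootsFinset
    rwa [Polynomial.nthRootsFinset] at this
  -- bound each term by 1
  have hterm : ∀ α ∈ (Polynomial.nthRoots N (1 : ℂ)).toFinset,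
      ‖α ^ n * Complex.exp (-2 * Complex.I * (((α * z).re : ℝ) : ℂ))‖ = 1 := by
    intro α hα
    have hαN : α ^ N = 1 := by
      rw [Multiset.mem_toFinset, Polynomial.mem_nthRoots (by omega)] at hα
      exact hα
    have habs : ‖α‖ = 1 := Complex.norm_eq_one_of_pow_eq_one hαN hN0
    rw [norm_mul, norm_pow, habs, one_pow, Complex.norm_exp]
    have : (-2 * Complex.I * (((α * z).re : ℝ) : ℂ)).re = 0 := by
      simp [Complex.mul_re, Complex.mul_im]
    rw [this, Real.exp_zero, one_mul]
  -- bound E by 1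
  have hE : ‖z ^ (N - n) * D (z ^ N)‖ ≤ 1 := by
    rw [← hD z hz0, norm_mul]
    have hsum : ‖∑ α ∈ (Polynomial.nthRoots N (1 : ℂ)).toFinset,
        α ^ n * Complex.exp (-2 * Complex.I * (((α * z).re : ℝ) : ℂ))‖ ≤ N := by
      calc _ ≤ ∑ α ∈ (Polynomial.nthRoots N (1 : ℂ)).toFinset,
            ‖α ^ n * Complex.exp (-2 * Complex.I * (((α * z).re : ℝ) : ℂ))‖ := by
            exact norm_sum_le _ _
        _ = ∑ α ∈ (Polynomial.nthRoots N (1 : ℂ)).toFinset, 1 :=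
            Finset.sum_congr rfl hterm
        _ = N := by rw [Finset.sum_const, hcard]; simp
    have h1N : ‖(1 / (N : ℂ))‖ = 1 / N := by
      simp
    rw [h1N]
    rw [div_mul_eq_mul_div, one_mul, div_le_one (by positivity)]
    exact hsum
  rw [hzN] at hE
  -- translate to rpow estimates
  have hzabs : ‖z‖ > 0 := norm_pos_iff.mpr hz0
  have hwabs : ‖w‖ > 0 := norm_pos_iff.mpr hw
  have hzw : ‖z‖ ^ (N : ℝ) = ‖w‖ := by
    rw [← hzN, norm_pow, ← Real.rpow_natCast]
  have hzw' : ‖z‖ = ‖w‖ ^ ((N : ℝ)⁻¹) := by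
    rw [← hzw, ← Real.rpow_mul hzabs.le,
      mul_inv_cancel₀ (by exact_mod_cast hN0 : (N : ℝ) ≠ 0), Real.rpow_one]
  rw [norm_mul, norm_pow] at hE
  have hE' : ‖z‖ ^ ((N : ℝ) - n) * ‖D w‖ ≤ 1 := by
    rw [← Real.rpow_natCast ‖z‖ (N - n), Nat.cast_sub hnN] at hE
    exact hE
  have key : ‖D w‖ ≤ ‖z‖ ^ (-((N : ℝ) - n)) := by
    have hp : (0:ℝ) < ‖z‖ ^ ((N : ℝ) - n) := Real.rpow_pos_of_pos hzabs _
    rw [Real.rpow_neg hzabs.le, inv_eq_one_div, le_div_iff₀ hp, mul_comm]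
    exact hE'
  calc ‖D w‖ ≤ ‖z‖ ^ (-((N : ℝ) - n)) := key
    _ = ‖w‖ ^ ((n : ℝ) / N - 1) := by
        rw [hzw', ← Real.rpow_mul hwabs.le]
        congr 1
        field_simp
        ring
end
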